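/- If L is a list-assignment for a finite graph G with deg_G(v) + 2 ≤ 3|L(v)| for every vertex v, and φ is an L-colouring of G minimising the number of monochromatic edges, then φ has defect 2, and moreover for every vertex v with exactly 2 same-coloured neighbours there exists a colour β ∈ L(v) \ {φ(v)} such that at most two neighbours of v are coloured β by φ. -/

import Mathlib

/-- The monochromatic subgraph of `G` under colouring `φ`. -/
def SimpleGraph.monoSub {V : Type*} (G : SimpleGraph V) (φ : V → ℕ) : SimpleGraph V where
  Adj u v := G.Adj u v ∧ φ u = φ v
  symm := ⟨fun u v h => ⟨G.adj_symm h.1, h.2.symm⟩⟩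
  loopless := ⟨fun v h => G.ne_of_adj h.1 rfl⟩

/-- The colouring `φ` has defect at most `d`: every vertex has at most `d`
neighbours of its own colour. -/
def SimpleGraph.DefectLe {V : Type*} (G : SimpleGraph V) (φ : V → ℕ) (d : ℕ) : Prop :=
  ∀ v : V, {w : V | G.Adj v w ∧ φ w = φ v}.ncard ≤ d

/-- The colouring `φ` has clustering at most `c`: every connected component of
the monochromatic subgraph has at most `c` vertices. -/
def SimpleGraph.ClusterLe {V : Type*} (G : SimpleGraph V) (φ : V → ℕ) (c : ℕ) : Prop :=
  ∀ v : V, {w : V | (G.monoSub φ).Reachable v w}.ncard ≤ c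

/-- Twice the number of edges of `G` inside the vertex set `s`
(the number of ordered adjacent pairs in `s`). -/
noncomputable def SimpleGraph.degPairs {V : Type*} (G : SimpleGraph V) (s : Finset V) : ℕ :=
  {p : V × V | p.1 ∈ s ∧ p.2 ∈ s ∧ G.Adj p.1 p.2}.ncard

/-- Twice the number of monochromatic edges under `φ`. -/
noncomputable def SimpleGraph.monoCount {V : Type*} (G : SimpleGraph V) (φ : V → ℕ) : ℕ :=
  {p : V × V | G.Adj p.1 p.2 ∧ φ p.1 = φ p.2}.ncard


/-! Recolouring a single vertex `v` from `φ v` to `β` changes the number of monochromatic edges by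
(#neighbours of colour `β`) − (#neighbours of colour `φ v`), so at a minimiser every colour of
`L v` is carried by at least as many neighbours of `v` as `φ v` itself. The colour classes of the
neighbourhood are disjoint, so their sizes sum to at most `deg v ≤ 3|L v| - 2`; hence they cannot
all be at least `3` outside `φ v` while `φ v` has at least `2`. -/

open Finset

theorem Set.sum_ncard_setOf_and_eq_le {α κ : Type*} [Finite α] (p : α → Prop) (f : α → κ)
    (t : Finset κ) : ∑ b ∈ t, {a | p a ∧ f a = b}.ncard ≤ {a | p a}.ncard := by
  classical
  have := Fintype.ofFinite α
  simp only [Set.ncard_eq_toFinset_card', Set.toFinset_ofPred, ← filter_filter]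
  exact (sum_card_fiberwise_eq_card_filter _ t f).le.trans (card_filter_le _ _)

theorem Finset.exists_ne_le_two_of_sum_add_two_le {κ : Type*} {t : Finset κ} {c : κ} (hc : c ∈ t)
    (f : κ → ℕ) (hsum : ∑ b ∈ t, f b + 2 ≤ 3 * #t) (hfc : 2 ≤ f c) :
    ∃ b ∈ t, b ≠ c ∧ f b ≤ 2 := by
  classical
  by_contra! h
  have hlow : 3 * #(t.erase c) ≤ ∑ b ∈ t.erase c, f b := by
    rw [mul_comm, ← smul_eq_mul, ← sum_const]
    exact sum_le_sum fun b hb => h b (mem_of_mem_erase hb) (ne_of_mem_erase hb)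
  rw [← sum_erase_add t f hc] at hsum
  rw [card_erase_of_mem hc] at hlow
  have := card_pos.mpr ⟨c, hc⟩
  omega

namespace SimpleGraph

variable {V : Type*}

theorem ncard_setOf_adj_eq_ncard_off_add_two_mul_ncard_neighborSet [Finite V] (H : SimpleGraph V)
    (v : V) :
    {p : V × V | H.Adj p.1 p.2}.ncard =
      {p : V × V | p.1 ≠ v ∧ p.2 ≠ v ∧ H.Adj p.1 p.2}.ncard + 2 * (H.neighborSet v).ncard := by
  set off := {p : V × V | p.1 ≠ v ∧ p.2 ≠ v ∧ H.Adj p.1 p.2}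
  set out := Prod.mk v '' H.neighborSet v
  set into := (fun w => (w, v)) '' H.neighborSet v
  have hsplit : {p : V × V | H.Adj p.1 p.2} = off ∪ (out ∪ into) := by
    ext ⟨a, b⟩
    simp only [off, out, into, Set.mem_ofPred_eq, Set.mem_union, Set.mem_image, mem_neighborSet,
      Prod.mk.injEq]
    constructor
    · intro hab
      by_cases ha : a = v
      · exact Or.inr (Or.inl ⟨b, ha ▸ hab, ha.symm, rfl⟩)
      by_cases hb : b = v
      · exact Or.inr (Or.inr ⟨a, hb ▸ hab.symm, rfl, hb.symm⟩)
      exact Or.inl ⟨ha, hb, hab⟩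
    · rintro (⟨-, -, hab⟩ | ⟨w, hw, rfl, rfl⟩ | ⟨w, hw, rfl, rfl⟩)
      exacts [hab, hw, hw.symm]
  have hdisj_out_into : Disjoint out into := by
    rw [Set.disjoint_left]
    rintro _ ⟨w, hw, rfl⟩ ⟨_, -, hvw⟩
    obtain ⟨-, rfl⟩ := Prod.mk.inj hvw
    exact H.irrefl hw
  have hdisj_off : Disjoint off (out ∪ into) := by
    rw [Set.disjoint_left]
    rintro _ ⟨h1, h2, -⟩ (⟨w, -, rfl⟩ | ⟨w, -, rfl⟩)
    exacts [h1 rfl, h2 rfl]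
  rw [hsplit, Set.ncard_union_eq hdisj_off, Set.ncard_union_eq hdisj_out_into,
    Set.ncard_image_of_injective _ (Prod.mk_right_injective v),
    Set.ncard_image_of_injective _ (Prod.mk_left_injective v)]
  ring

theorem monoCount_eq_ncard_monoSub_adj (G : SimpleGraph V) (φ : V → ℕ) :
    G.monoCount φ = {p : V × V | (G.monoSub φ).Adj p.1 p.2}.ncard :=
  rfl

theorem monoCount_update_add [Finite V] [DecidableEq V] (G : SimpleGraph V) (φ : V → ℕ) (v : V)
    (β : ℕ) :
    G.monoCount (Function.update φ v β) + 2 * {w | G.Adj v w ∧ φ w = φ v}.ncard =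
      G.monoCount φ + 2 * {w | G.Adj v w ∧ φ w = β}.ncard := by
  have hoff : {p : V × V | p.1 ≠ v ∧ p.2 ≠ v ∧ (G.monoSub (Function.update φ v β)).Adj p.1 p.2} =
      {p : V × V | p.1 ≠ v ∧ p.2 ≠ v ∧ (G.monoSub φ).Adj p.1 p.2} := by
    ext ⟨a, b⟩
    simp only [Set.mem_ofPred_eq, monoSub]
    grind [Function.update_of_ne]
  have hnbr : ∀ χ : V → ℕ, (G.monoSub χ).neighborSet v = {w | G.Adj v w ∧ χ w = χ v} := by
    intro χ
    ext w
    simp only [mem_neighborSet, monoSub, Set.mem_ofPred_eq, eq_comm]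
  have hnbr_update : {w | G.Adj v w ∧ Function.update φ v β w = Function.update φ v β v} =
      {w | G.Adj v w ∧ φ w = β} := by
    ext w
    simp only [Set.mem_ofPred_eq, Function.update_self]
    grind [G.ne_of_adj, Function.update_of_ne]
  have hφ := ncard_setOf_adj_eq_ncard_off_add_two_mul_ncard_neighborSet (G.monoSub φ) v
  have hψ := ncard_setOf_adj_eq_ncard_off_add_two_mul_ncard_neighborSet
    (G.monoSub (Function.update φ v β)) v
  rw [hoff, hnbr, hnbr_update] at hψ
  rw [hnbr] at hφ
  rw [monoCount_eq_ncard_monoSub_adj, monoCount_eq_ncard_monoSub_adj]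
  omega

theorem ncard_adj_color_self_le_of_monoCount_min [Finite V] (G : SimpleGraph V) {L : V → Finset ℕ}
    {φ : V → ℕ} (hφ : ∀ v, φ v ∈ L v)
    (hmin : ∀ ψ : V → ℕ, (∀ v, ψ v ∈ L v) → G.monoCount φ ≤ G.monoCount ψ)
    {v : V} {β : ℕ} (hβ : β ∈ L v) :
    {w | G.Adj v w ∧ φ w = φ v}.ncard ≤ {w | G.Adj v w ∧ φ w = β}.ncard := by
  classical
  have hψ : ∀ u, Function.update φ v β u ∈ L u := by
    intro u
    rcases eq_or_ne u v with rfl | hu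
    · simpa using hβ
    · simpa [Function.update_of_ne hu] using hφ u
  have := hmin _ hψ
  have := G.monoCount_update_add φ v β
  omega

end SimpleGraph

theorem stmt6 {V : Type*} [Fintype V] (G : SimpleGraph V) (L : V → Finset ℕ)
    (hL : ∀ v : V, {w : V | G.Adj v w}.ncard + 2 ≤ 3 * (L v).card)
    (φ : V → ℕ) (hφ : ∀ v, φ v ∈ L v)
    (hmin : ∀ ψ : V → ℕ, (∀ v, ψ v ∈ L v) → G.monoCount φ ≤ G.monoCount ψ) :
    G.DefectLe φ 2 ∧
      ∀ v : V, {w : V | G.Adj v w ∧ φ w = φ v}.ncard = 2 →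
        ∃ β ∈ L v, β ≠ φ v ∧ {w : V | G.Adj v w ∧ φ w = β}.ncard ≤ 2 := by
  have hfew : ∀ v, 2 ≤ {w | G.Adj v w ∧ φ w = φ v}.ncard →
      ∃ β ∈ L v, β ≠ φ v ∧ {w | G.Adj v w ∧ φ w = β}.ncard ≤ 2 := fun v hv =>
    exists_ne_le_two_of_sum_add_two_le (hφ v) (fun β => {w | G.Adj v w ∧ φ w = β}.ncard)
      ((Nat.add_le_add_right (Set.sum_ncard_setOf_and_eq_le (G.Adj v) φ (L v)) 2).trans (hL v)) hv
  refine ⟨fun v => ?_, fun v hv => hfew v hv.ge⟩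
  by_contra! hv
  obtain ⟨β, hβ, -, hβ2⟩ := hfew v (by omega)
  have := G.ncard_adj_color_self_le_of_monoCount_min hφ hmin hβ
  omega
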